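/- arXiv:2603.09388 — 2 statements merged into one kernel-verified Lean document; each statement's English description precedes it below -/
import Mathlib

section
/- Let p : ℝ^n → [1,∞) be measurable with p_+ < ∞ and suppose p(·) satisfies the reverse Hölder condition RH. Then there exist r, k > 1 and a function b from the set of all axis-parallel cubes to [0,2] such that: (i) for every cube Q and every t > 0 with ∫_Q t^{p(x)} dx ≤ 1, one has |Q| ( (1/|Q|) ∫_Q t^{r p(x)} dx )^{1/r} ≤ k ( ∫_Q t^{p(x)} dx + b(Q) ); and (ii) ∑_{Q∈F} b(Q) ≤ 2 for every family F of pairwise disjoint cubes. -/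
open MeasureTheory ENNReal Set

noncomputable section

/-- An axis-parallel cube in `ℝⁿ`, given by its center and (positive) side length. -/
structure RCube (n : ℕ) where
  center : Fin n → ℝ
  side : ℝ
  side_pos : 0 < side

namespace RCube

/-- The (closed) cube as a subset of `ℝⁿ`. -/
def toSet {n : ℕ} (Q : RCube n) : Set (Fin n → ℝ) :=
  {x | ∀ i, |x i - Q.center i| ≤ Q.side / 2}

/-- `rQ`: the cube concentric with `Q` whose side length is `r` times that of `Q`. -/
def scaledSet {n : ℕ} (Q : RCube n) (r : ℝ) : Set (Fin n → ℝ) :=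
  {x | ∀ i, |x i - Q.center i| ≤ r * Q.side / 2}

end RCube

/-- A family of pairwise disjoint cubes. -/
def PairwiseDisjointCubes {n : ℕ} (F : Set (RCube n)) : Prop :=
  F.Pairwise fun Q₁ Q₂ => Disjoint Q₁.toSet Q₂.toSet

/-- The variable Lebesgue norm `‖f‖_{p(·)}` for a real-valued (finite) exponent,
applied to an `ℝ≥0∞`-valued function: `inf {λ > 0 : ∫ (f/λ)^{p(x)} dx ≤ 1}`. -/
def vnorm {n : ℕ} (p : (Fin n → ℝ) → ℝ) (f : (Fin n → ℝ) → ℝ≥0∞) : ℝ≥0∞ :=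
  sInf {lam : ℝ≥0∞ | 0 < lam ∧ (∫⁻ x, (f x / lam) ^ p x) ≤ 1}

/-- `t^e` for `t, e ∈ [0,∞]`, with the standard variable-exponent convention
`t^∞ = 0` for `t ≤ 1` and `t^∞ = ∞` for `t > 1`. -/
def epow (t e : ℝ≥0∞) : ℝ≥0∞ :=
  if e = ∞ then (if t ≤ 1 then 0 else ∞) else t ^ e.toReal

/-- The variable Lebesgue norm for an exponent with values in `[1,∞]`. -/
def vnormE {n : ℕ} (p : (Fin n → ℝ) → ℝ≥0∞) (f : (Fin n → ℝ) → ℝ≥0∞) : ℝ≥0∞ :=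
  sInf {lam : ℝ≥0∞ | 0 < lam ∧ (∫⁻ x, epow (f x / lam) (p x)) ≤ 1}

/-- `|f|` as an `ℝ≥0∞`-valued function. -/
def ofR {n : ℕ} (f : (Fin n → ℝ) → ℝ) : (Fin n → ℝ) → ℝ≥0∞ :=
  fun x => ENNReal.ofReal |f x|

/-- The `ℝ≥0∞`-valued characteristic function of a set. -/
def chiE {n : ℕ} (S : Set (Fin n → ℝ)) : (Fin n → ℝ) → ℝ≥0∞ :=
  S.indicator fun _ => 1

/-- The Hardy--Littlewood maximal operator (over axis-parallel cubes containing `x`). -/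
def hlMaximal {n : ℕ} (f : (Fin n → ℝ) → ℝ) (x : Fin n → ℝ) : ℝ≥0∞ :=
  ⨆ (Q : RCube n) (_ : x ∈ Q.toSet),
    (∫⁻ y in Q.toSet, ENNReal.ofReal |f y|) / volume Q.toSet

/-- `M` is bounded on `L^{p(·)}`: there is `C > 0` with `‖Mf‖_{p(·)} ≤ C ‖f‖_{p(·)}`
for every `f ∈ L^{p(·)}`. -/
def MaximalBounded {n : ℕ} (p : (Fin n → ℝ) → ℝ) : Prop :=
  ∃ C > (0 : ℝ), ∀ f : (Fin n → ℝ) → ℝ, Measurable f → vnorm p (ofR f) < ∞ →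
    vnorm p (hlMaximal f) ≤ ENNReal.ofReal C * vnorm p (ofR f)

/-- The function `∑_{Q ∈ F} t_Q χ_{E_Q}` (for a pairwise disjoint family,
written as a pointwise supremum). -/
def cubeSum {n : ℕ} (F : Set (RCube n)) (t : RCube n → ℝ)
    (E : RCube n → Set (Fin n → ℝ)) (x : Fin n → ℝ) : ℝ≥0∞ :=
  ⨆ (Q : RCube n) (_ : Q ∈ F) (_ : x ∈ E Q), ENNReal.ofReal (t Q)

/-- `p(·)` satisfies the `A_∞` condition with parameter `lam` and constant `C`. -/
def AInftyWith {n : ℕ} (p : (Fin n → ℝ) → ℝ) (lam C : ℝ) : Prop :=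
  ∀ F : Set (RCube n), PairwiseDisjointCubes F →
    ∀ t : RCube n → ℝ, (∀ Q ∈ F, 0 ≤ t Q) →
      ∀ E : RCube n → Set (Fin n → ℝ),
        (∀ Q ∈ F, MeasurableSet (E Q) ∧ E Q ⊆ Q.toSet ∧
          ENNReal.ofReal lam * volume Q.toSet ≤ volume (E Q)) →
        vnorm p (cubeSum F t RCube.toSet) ≤ ENNReal.ofReal C * vnorm p (cubeSum F t E)

/-- The `A_∞` condition for a real-valued exponent. -/
def AInfty {n : ℕ} (p : (Fin n → ℝ) → ℝ) : Prop :=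
  ∃ lam ∈ Ioo (0 : ℝ) 1, ∃ C > (0 : ℝ), AInftyWith p lam C

/-- `p(·)` satisfies the `A_∞` condition with parameter `lam` and constant `C`
(exponent with values in `[1,∞]`). -/
def AInftyWithE {n : ℕ} (p : (Fin n → ℝ) → ℝ≥0∞) (lam C : ℝ) : Prop :=
  ∀ F : Set (RCube n), PairwiseDisjointCubes F →
    ∀ t : RCube n → ℝ, (∀ Q ∈ F, 0 ≤ t Q) →
      ∀ E : RCube n → Set (Fin n → ℝ),
        (∀ Q ∈ F, MeasurableSet (E Q) ∧ E Q ⊆ Q.toSet ∧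
          ENNReal.ofReal lam * volume Q.toSet ≤ volume (E Q)) →
        vnormE p (cubeSum F t RCube.toSet) ≤ ENNReal.ofReal C * vnormE p (cubeSum F t E)

/-- The `A_∞` condition for an exponent with values in `[1,∞]`. -/
def AInftyE {n : ℕ} (p : (Fin n → ℝ) → ℝ≥0∞) : Prop :=
  ∃ lam ∈ Ioo (0 : ℝ) 1, ∃ C > (0 : ℝ), AInftyWithE p lam C

/-- The nonincreasing-rearrangement value `(f χ_Q)^*(s) = inf {α : |{x ∈ Q : |f x| > α}| ≤ s}`. -/
def rearr {n : ℕ} (f : (Fin n → ℝ) → ℝ) (Q : RCube n) (s : ℝ≥0∞) : ℝ≥0∞ :=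
  sInf {a : ℝ≥0∞ | volume {x | x ∈ Q.toSet ∧ a < ENNReal.ofReal |f x|} ≤ s}

/-- The `λ`-median maximal operator `m_λ`. -/
def medianMax {n : ℕ} (lam : ℝ) (f : (Fin n → ℝ) → ℝ) (x : Fin n → ℝ) : ℝ≥0∞ :=
  ⨆ (Q : RCube n) (_ : x ∈ Q.toSet), rearr f Q (ENNReal.ofReal lam * volume Q.toSet)

/-- The modified median maximal operator `m_{τ,r}` (supremum over cubes `Q` with `x ∈ rQ`). -/
def medianMaxR {n : ℕ} (tau r : ℝ) (f : (Fin n → ℝ) → ℝ) (x : Fin n → ℝ) : ℝ≥0∞ :=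
  ⨆ (Q : RCube n) (_ : x ∈ Q.scaledSet r), rearr f Q (ENNReal.ofReal tau * volume Q.toSet)

/-- The average `⟨f⟩_Q = (1/|Q|) ∫_Q f`. -/
def cubeAvg {n : ℕ} (f : (Fin n → ℝ) → ℝ) (Q : RCube n) : ℝ :=
  (∫ y in Q.toSet, f y) / (volume Q.toSet).toReal

/-- `|T_F f|` for a pairwise disjoint family `F`, written as a pointwise supremum. -/
def avgSum {n : ℕ} (F : Set (RCube n)) (f : (Fin n → ℝ) → ℝ) (x : Fin n → ℝ) : ℝ≥0∞ :=
  ⨆ (Q : RCube n) (_ : Q ∈ F) (_ : x ∈ Q.toSet), ENNReal.ofReal |cubeAvg f Q|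

/-- The reverse Hölder condition `RH`. -/
def RHCond {n : ℕ} (p : (Fin n → ℝ) → ℝ) : Prop :=
  ∃ r : ℝ, 1 < r ∧ ∃ C : ℝ, 0 < C ∧
    ∀ S : Set (RCube n), PairwiseDisjointCubes S →
      ∀ t : RCube n → ℝ, (∀ Q ∈ S, 0 ≤ t Q) →
        (∑' Q : S, ∫⁻ x in Q.1.toSet, ENNReal.ofReal (t Q.1) ^ p x) ≤ 1 →
        (∑' Q : S, volume Q.1.toSet *
            ((∫⁻ x in Q.1.toSet, ENNReal.ofReal (t Q.1) ^ (r * p x)) / volume Q.1.toSet)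
              ^ (1 / r)) ≤ ENNReal.ofReal C

lemma RCube.volume_toSet_lt_top {n : ℕ} (Q : RCube n) : volume Q.toSet < ∞ := by
  have hsub : Q.toSet ⊆ Metric.closedBall Q.center (Q.side / 2) := by
    intro x hx
    rw [Metric.mem_closedBall, dist_pi_le_iff (by have := Q.side_pos; positivity)]
    intro i
    rw [Real.dist_eq]
    exact hx i
  exact lt_of_le_of_lt (measure_mono hsub) (isCompact_closedBall _ _).measure_lt_top

def Af {n : ℕ} (p : (Fin n → ℝ) → ℝ) (Q : RCube n) (t : ℝ) : ℝ≥0∞ :=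
  ∫⁻ x in Q.toSet, ENNReal.ofReal t ^ p x

def Gf {n : ℕ} (p : (Fin n → ℝ) → ℝ) (r : ℝ) (Q : RCube n) (t : ℝ) : ℝ≥0∞ :=
  volume Q.toSet * ((∫⁻ x in Q.toSet, ENNReal.ofReal t ^ (r * p x)) / volume Q.toSet) ^ (1 / r)

lemma Af_nonempty_small {n : ℕ} (p : (Fin n → ℝ) → ℝ) (hp1 : ∀ x, 1 ≤ p x) (Q : RCube n) :
    ∃ t : ℝ, 0 < t ∧ Af p Q t ≤ 1 := by
  set V : ℝ≥0∞ := volume Q.toSet with hV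
  have hVlt : V < ∞ := Q.volume_toSet_lt_top
  refine ⟨min 1 (1 / (V.toReal + 1)), lt_min one_pos (by positivity), ?_⟩
  set t : ℝ := min 1 (1 / (V.toReal + 1)) with htdef
  have ht1 : t ≤ 1 := min_le_left _ _
  have ht0 : 0 ≤ t := le_of_lt (lt_min one_pos (by positivity))
  have hpt : ∀ x, ENNReal.ofReal t ^ p x ≤ ENNReal.ofReal t := by
    intro x
    have h1 : ENNReal.ofReal t ≤ 1 := by
      rw [ENNReal.ofReal_le_one]; exact ht1
    calc ENNReal.ofReal t ^ p x ≤ ENNReal.ofReal t ^ (1:ℝ) :=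
          ENNReal.rpow_le_rpow_of_exponent_ge h1 (hp1 x)
      _ = ENNReal.ofReal t := ENNReal.rpow_one _
  calc Af p Q t ≤ ∫⁻ _x in Q.toSet, ENNReal.ofReal t := lintegral_mono fun x => hpt x
    _ = ENNReal.ofReal t * V := by rw [setLIntegral_const]
    _ = ENNReal.ofReal t * ENNReal.ofReal V.toReal := by rw [ENNReal.ofReal_toReal hVlt.ne]
    _ = ENNReal.ofReal (t * V.toReal) := (ENNReal.ofReal_mul ht0).symm
    _ ≤ 1 := by
        rw [← ENNReal.ofReal_one]
        apply ENNReal.ofReal_le_ofReal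
        have h2 : t ≤ 1 / (V.toReal + 1) := min_le_right _ _
        have h3 : (0:ℝ) ≤ V.toReal := ENNReal.toReal_nonneg
        have h4 : 1 / (V.toReal + 1) * V.toReal ≤ 1 := by
          rw [div_mul_eq_mul_div, one_mul]
          exact (div_le_one (by linarith)).mpr (by linarith)
        nlinarith [mul_le_mul_of_nonneg_right h2 h3]

lemma half_subset' {ι : Type*} [DecidableEq ι] :
    ∀ (N : ℕ) (s : Finset ι) (f : ι → ℝ≥0∞), s.card ≤ N →
      (∀ i ∈ s, f i ≤ 1/2) → 1/2 < ∑ i ∈ s, f i →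
      ∃ u ⊆ s, u.Nonempty ∧ 1/2 < ∑ i ∈ u, f i ∧ ∑ i ∈ u, f i ≤ 1 := by
  intro N
  induction N with
  | zero =>
    intro s f hcard _ hgt
    rw [Finset.card_eq_zero.mp (Nat.le_zero.mp hcard)] at hgt
    simp at hgt
  | succ N ih =>
    intro s f hcard hle hgt
    by_cases hs1 : ∑ i ∈ s, f i ≤ 1
    · refine ⟨s, Finset.Subset.refl s, ?_, hgt, hs1⟩
      rw [Finset.nonempty_iff_ne_empty]
      rintro rfl
      simp at hgt
    · push_neg at hs1
      have hsne : s.Nonempty := by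
        rw [Finset.nonempty_iff_ne_empty]
        rintro rfl
        simp at hs1
      obtain ⟨i, hi⟩ := hsne
      have hsplit : ∑ j ∈ s, f j = f i + ∑ j ∈ s.erase i, f j :=
        (Finset.add_sum_erase s f hi).symm
      have key : 1/2 < ∑ j ∈ s.erase i, f j := by
        by_contra hle2
        push_neg at hle2
        have hle3 : ∑ j ∈ s, f j ≤ 1/2 + 1/2 := by
          rw [hsplit]; exact add_le_add (hle i hi) hle2
        rw [ENNReal.add_halves] at hle3
        exact absurd hs1 (not_lt.mpr hle3)
      have hcard' : (s.erase i).card ≤ N := by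
        have := Finset.card_erase_of_mem hi
        omega
      obtain ⟨u, hu, h1, h2, h3⟩ := ih (s.erase i) f hcard'
        (fun j hj => hle j (Finset.mem_of_mem_erase hj)) key
      exact ⟨u, hu.trans (Finset.erase_subset i s), h1, h2, h3⟩

lemma half_subset {ι : Type*} [DecidableEq ι] (s : Finset ι) (f : ι → ℝ≥0∞)
    (hle : ∀ i ∈ s, f i ≤ 1) (hgt : 1 < ∑ i ∈ s, f i) :
    ∃ u ⊆ s, u.Nonempty ∧ 1/2 < ∑ i ∈ u, f i ∧ ∑ i ∈ u, f i ≤ 1 := by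
  by_cases hbig : ∃ i ∈ s, 1/2 < f i
  · obtain ⟨i, hi, hfi⟩ := hbig
    exact ⟨{i}, Finset.singleton_subset_iff.mpr hi, Finset.singleton_nonempty i,
      by simpa using hfi, by simpa using hle i hi⟩
  · push_neg at hbig
    have h12 : (1/2 : ℝ≥0∞) < 1 := ENNReal.half_lt_self one_ne_zero one_ne_top
    exact half_subset' s.card s f le_rfl hbig (h12.trans hgt)

lemma main_ind {n : ℕ} (p : (Fin n → ℝ) → ℝ) (r : ℝ) (C' : ℝ≥0∞)
    (RHfin : ∀ s : Finset (RCube n), PairwiseDisjointCubes (↑s : Set (RCube n)) →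
      ∀ t : RCube n → ℝ, (∀ Q ∈ s, 0 ≤ t Q) →
      (∑ Q ∈ s, Af p Q (t Q)) ≤ 1 → (∑ Q ∈ s, Gf p r Q (t Q)) ≤ C') :
    ∀ (N : ℕ) (s : Finset (RCube n)), s.card ≤ N →
      PairwiseDisjointCubes (↑s : Set (RCube n)) →
      ∀ t : RCube n → ℝ, (∀ Q ∈ s, 0 ≤ t Q) → (∀ Q ∈ s, Af p Q (t Q) ≤ 1) →
      (∑ Q ∈ s, Gf p r Q (t Q)) ≤ C' * (2 * ∑ Q ∈ s, Af p Q (t Q) + 1) := by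
  classical
  intro N
  induction N with
  | zero =>
    intro s hcard _ t _ _
    rw [Finset.card_eq_zero.mp (Nat.le_zero.mp hcard)]
    simp
  | succ N ih =>
    intro s hcard hdisj t ht hA1
    by_cases hsum : ∑ Q ∈ s, Af p Q (t Q) ≤ 1
    · calc ∑ Q ∈ s, Gf p r Q (t Q) ≤ C' := RHfin s hdisj t ht hsum
        _ ≤ C' * (2 * ∑ Q ∈ s, Af p Q (t Q) + 1) :=
          le_mul_of_one_le_right zero_le (le_add_self)
    · push_neg at hsum
      obtain ⟨u, hus, hune, hu2, hu1⟩ := half_subset s (fun Q => Af p Q (t Q)) hA1 hsum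
      have hsubset : (↑u : Set (RCube n)) ⊆ ↑s := Finset.coe_subset.mpr hus
      have hGu : ∑ Q ∈ u, Gf p r Q (t Q) ≤ C' :=
        RHfin u (hdisj.mono hsubset) t (fun Q hQ => ht Q (hus hQ)) hu1
      have hcard' : (s \ u).card ≤ N := by
        have h1 := Finset.card_sdiff_of_subset hus
        have h2 := Finset.card_le_card hus
        have h3 : 1 ≤ u.card := Finset.card_pos.mpr hune
        omega
      have hsd : (↑(s \ u) : Set (RCube n)) ⊆ ↑s := Finset.coe_subset.mpr (Finset.sdiff_subset)
      have hrest := ih (s \ u) hcard' (hdisj.mono hsd) t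
        (fun Q hQ => ht Q (Finset.sdiff_subset hQ))
        (fun Q hQ => hA1 Q (Finset.sdiff_subset hQ))
      have hsplitG : ∑ Q ∈ s, Gf p r Q (t Q)
          = ∑ Q ∈ s \ u, Gf p r Q (t Q) + ∑ Q ∈ u, Gf p r Q (t Q) :=
        (Finset.sum_sdiff hus).symm
      have hsplitA : ∑ Q ∈ s, Af p Q (t Q)
          = ∑ Q ∈ s \ u, Af p Q (t Q) + ∑ Q ∈ u, Af p Q (t Q) :=
        (Finset.sum_sdiff hus).symm
      have h1le : (1:ℝ≥0∞) ≤ 2 * ∑ Q ∈ u, Af p Q (t Q) := by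
        have : (2:ℝ≥0∞) * (1/2) ≤ 2 * ∑ Q ∈ u, Af p Q (t Q) :=
          mul_le_mul_right hu2.le 2
        calc (1:ℝ≥0∞) = 2 * (1/2) := by
              rw [one_div, ENNReal.mul_inv_cancel two_ne_zero ofNat_ne_top]
          _ ≤ _ := this
      rw [hsplitG, hsplitA]
      calc ∑ Q ∈ s \ u, Gf p r Q (t Q) + ∑ Q ∈ u, Gf p r Q (t Q)
          ≤ C' * (2 * ∑ Q ∈ s \ u, Af p Q (t Q) + 1) + C' := add_le_add hrest hGu
        _ = C' * (2 * ∑ Q ∈ s \ u, Af p Q (t Q) + 1 + 1) := by ring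
        _ ≤ C' * (2 * (∑ Q ∈ s \ u, Af p Q (t Q) + ∑ Q ∈ u, Af p Q (t Q)) + 1) := by
            apply mul_le_mul_right
            calc 2 * ∑ Q ∈ s \ u, Af p Q (t Q) + 1 + 1
                ≤ 2 * ∑ Q ∈ s \ u, Af p Q (t Q) + 1 + (2 * ∑ Q ∈ u, Af p Q (t Q)) :=
                  add_le_add_right h1le _
              _ = 2 * (∑ Q ∈ s \ u, Af p Q (t Q) + ∑ Q ∈ u, Af p Q (t Q)) + 1 := by ring

theorem statement5 {n : ℕ} (p : (Fin n → ℝ) → ℝ) (hpm : Measurable p)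
    (hp1 : ∀ x, 1 ≤ p x)
    (hup : ∃ B : ℝ, ∀ᵐ x ∂(volume : Measure (Fin n → ℝ)), p x ≤ B)
    (hRH : RHCond p) :
    ∃ r : ℝ, 1 < r ∧ ∃ k : ℝ, 1 < k ∧ ∃ b : RCube n → ℝ≥0∞,
      (∀ Q : RCube n, b Q ≤ 2) ∧
      (∀ F : Set (RCube n), PairwiseDisjointCubes F → (∑' Q : F, b Q.1) ≤ 2) ∧
      ∀ Q : RCube n, ∀ t : ℝ, 0 < t →
        (∫⁻ x in Q.toSet, ENNReal.ofReal t ^ p x) ≤ 1 →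
        volume Q.toSet *
            ((∫⁻ x in Q.toSet, ENNReal.ofReal t ^ (r * p x)) / volume Q.toSet) ^ (1 / r) ≤
          ENNReal.ofReal k * ((∫⁻ x in Q.toSet, ENNReal.ofReal t ^ p x) + b Q) := by
  classical
  obtain ⟨r, hr, C, hC, hRH⟩ := hRH
  set C' : ℝ≥0∞ := ENNReal.ofReal C with hC'def
  have hC'0 : C' ≠ 0 := (ENNReal.ofReal_pos.mpr hC).ne'
  have hC'top : C' ≠ ∞ := ENNReal.ofReal_ne_top
  have RHfin : ∀ s : Finset (RCube n), PairwiseDisjointCubes (↑s : Set (RCube n)) →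
      ∀ t : RCube n → ℝ, (∀ Q ∈ s, 0 ≤ t Q) →
      (∑ Q ∈ s, Af p Q (t Q)) ≤ 1 → (∑ Q ∈ s, Gf p r Q (t Q)) ≤ C' := by
    intro s hs t ht hsum
    have e1 : (∑' Q : (↑s : Set (RCube n)), ∫⁻ x in Q.1.toSet, ENNReal.ofReal (t Q.1) ^ p x)
        = ∑ Q ∈ s, Af p Q (t Q) := by
      rw [← Finset.tsum_subtype' s (fun Q => Af p Q (t Q))]
      rfl
    have e2 : (∑' Q : (↑s : Set (RCube n)), volume Q.1.toSet *
          ((∫⁻ x in Q.1.toSet, ENNReal.ofReal (t Q.1) ^ (r * p x)) / volume Q.1.toSet)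
            ^ (1 / r))
        = ∑ Q ∈ s, Gf p r Q (t Q) := by
      rw [← Finset.tsum_subtype' s (fun Q => Gf p r Q (t Q))]
      rfl
    have h := hRH (↑s) hs t (fun Q hQ => ht Q (Finset.mem_coe.mp hQ)) (by rw [e1]; exact hsum)
    rw [e2] at h
    exact h
  have hsingle : ∀ (Q : RCube n) (t : ℝ), 0 ≤ t → Af p Q t ≤ 1 → Gf p r Q t ≤ C' := by
    intro Q t ht hA1
    have h := RHfin {Q} (by simp [PairwiseDisjointCubes]) (fun _ => t) (fun _ _ => ht)
      (by simpa using hA1)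
    simpa using h
  set bs : RCube n → Set ℝ≥0∞ := fun Q =>
    {v | ∃ t : ℝ, 0 < t ∧ Af p Q t ≤ 1 ∧ v = Gf p r Q t / C' - 2 * Af p Q t} with hbs
  set b : RCube n → ℝ≥0∞ := fun Q => sSup (bs Q) with hbdef
  have hb1 : ∀ Q, b Q ≤ 1 := by
    intro Q
    apply sSup_le
    rintro v ⟨t, ht, hA1, rfl⟩
    calc Gf p r Q t / C' - 2 * Af p Q t ≤ Gf p r Q t / C' := tsub_le_self
      _ ≤ 1 := ENNReal.div_le_of_le_mul (by simpa using hsingle Q t ht.le hA1)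
  have hbtop : ∀ Q, b Q ≠ ∞ := fun Q => ((hb1 Q).trans_lt one_lt_top).ne
  refine ⟨r, hr, max 2 (2*C), lt_of_lt_of_le one_lt_two (le_max_left _ _), b,
    fun Q => (hb1 Q).trans one_le_two, ?_, ?_⟩
  · -- Carleson-type sum condition
    intro F hF
    rw [ENNReal.tsum_eq_iSup_sum]
    apply iSup_le
    intro s
    apply ENNReal.le_of_forall_pos_le_add
    intro ε hε _
    rcases Finset.eq_empty_or_nonempty s with rfl | hsne
    · simp
    have hcard0 : (s.card : ℝ≥0∞) ≠ 0 := by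
      exact_mod_cast Finset.card_ne_zero.mpr hsne
    set δ : ℝ≥0∞ := (ε : ℝ≥0∞) / s.card with hδdef
    have hδ0 : δ ≠ 0 := by
      rw [hδdef]
      simp only [ne_eq, ENNReal.div_eq_zero_iff, not_or]
      exact ⟨ENNReal.coe_ne_zero.mpr hε.ne', ENNReal.natCast_ne_top _⟩
    have hchoice : ∀ Q : RCube n, ∃ t : ℝ, 0 < t ∧ Af p Q t ≤ 1 ∧
        b Q ≤ (Gf p r Q t / C' - 2 * Af p Q t) + δ := by
      intro Q
      obtain ⟨t₀, ht₀, hA₀⟩ := Af_nonempty_small p hp1 Q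
      by_cases hQδ : b Q ≤ δ
      · exact ⟨t₀, ht₀, hA₀, hQδ.trans le_add_self⟩
      · push_neg at hQδ
        have hbne0 : b Q ≠ 0 := by
          intro h
          rw [h] at hQδ
          exact (not_lt.mpr (show (0:ℝ≥0∞) ≤ δ from zero_le)) hQδ
        have hlt : b Q - δ < b Q := ENNReal.sub_lt_self (hbtop Q) hbne0 hδ0
        obtain ⟨v, hv, hlt2⟩ := lt_sSup_iff.mp (show b Q - δ < sSup (bs Q) from hlt)
        obtain ⟨t, ht, hA1, rfl⟩ := hv
        exact ⟨t, ht, hA1, tsub_le_iff_right.mp hlt2.le⟩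
    choose ts hts0 htsA htsb using hchoice
    set s' : Finset (RCube n) := s.image Subtype.val with hs'def
    have hsum_eq : ∑ i ∈ s, b i.1 = ∑ Q ∈ s', b Q :=
      (Finset.sum_image (fun x _ y _ h => Subtype.val_injective h)).symm
    have hs'F : (↑s' : Set (RCube n)) ⊆ F := by
      intro Q hQ
      rw [hs'def] at hQ
      simp only [Finset.coe_image, Set.mem_image, Finset.mem_coe] at hQ
      obtain ⟨i, _, rfl⟩ := hQ
      exact i.2
    have hs'disj : PairwiseDisjointCubes (↑s' : Set (RCube n)) := hF.mono hs'F
    have hcard' : (s'.card : ℝ≥0∞) * δ ≤ ε := by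
      calc (s'.card : ℝ≥0∞) * δ ≤ (s.card : ℝ≥0∞) * δ := by
            apply mul_le_mul_left
            exact_mod_cast Finset.card_image_le
        _ = ε := by rw [hδdef]; exact ENNReal.mul_div_cancel' (fun h => absurd h hcard0) (fun h => absurd h (ENNReal.natCast_ne_top _))
    set T : Finset (RCube n) :=
      s'.filter (fun Q => 2 * Af p Q (ts Q) < Gf p r Q (ts Q) / C') with hTdef
    have hTsub : T ⊆ s' := Finset.filter_subset _ _
    have hmain := main_ind p r C' RHfin T.card T le_rfl
      (hs'disj.mono (Finset.coe_subset.mpr hTsub)) ts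
      (fun Q _ => (hts0 Q).le) (fun Q _ => htsA Q)
    have hAsum_ne : (∑ Q ∈ T, Af p Q (ts Q)) ≠ ∞ :=
      (ENNReal.sum_lt_top.mpr fun Q _ => ((htsA Q).trans_lt one_lt_top)).ne
    have h2Afin : (2 * ∑ Q ∈ T, Af p Q (ts Q)) ≠ ∞ :=
      ENNReal.mul_ne_top (by norm_num) hAsum_ne
    have hdiv : ∑ Q ∈ T, Gf p r Q (ts Q) / C' ≤ 2 * ∑ Q ∈ T, Af p Q (ts Q) + 1 := by
      simp only [div_eq_mul_inv, ← Finset.sum_mul]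
      rw [← div_eq_mul_inv]
      exact ENNReal.div_le_of_le_mul (hmain.trans_eq (mul_comm _ _))
    have hT1 : ∑ Q ∈ T, (Gf p r Q (ts Q) / C' - 2 * Af p Q (ts Q)) ≤ 1 := by
      have hsum2 : ∑ Q ∈ T, (Gf p r Q (ts Q) / C' - 2 * Af p Q (ts Q))
          + 2 * ∑ Q ∈ T, Af p Q (ts Q) = ∑ Q ∈ T, Gf p r Q (ts Q) / C' := by
        rw [Finset.mul_sum, ← Finset.sum_add_distrib]
        refine Finset.sum_congr rfl fun Q hQ => ?_
        exact tsub_add_cancel_of_le (le_of_lt (Finset.mem_filter.mp hQ).2)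
      have hle2 : ∑ Q ∈ T, (Gf p r Q (ts Q) / C' - 2 * Af p Q (ts Q))
          + 2 * ∑ Q ∈ T, Af p Q (ts Q) ≤ 1 + 2 * ∑ Q ∈ T, Af p Q (ts Q) := by
        rw [hsum2, add_comm (1:ℝ≥0∞)]
        exact hdiv
      exact (WithTop.add_le_add_iff_right h2Afin).mp hle2
    have hsum_e : ∑ Q ∈ s', (Gf p r Q (ts Q) / C' - 2 * Af p Q (ts Q)) ≤ 1 := by
      rw [← Finset.sum_filter_add_sum_filter_not s'
        (fun Q => 2 * Af p Q (ts Q) < Gf p r Q (ts Q) / C')]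
      have hzero : ∑ Q ∈ s'.filter
          (fun Q => ¬ 2 * Af p Q (ts Q) < Gf p r Q (ts Q) / C'),
          (Gf p r Q (ts Q) / C' - 2 * Af p Q (ts Q)) = 0 := by
        refine Finset.sum_eq_zero fun Q hQ => ?_
        exact tsub_eq_zero_of_le (not_lt.mp (Finset.mem_filter.mp hQ).2)
      rw [hzero, add_zero]
      exact hT1
    calc ∑ i ∈ s, b i.1 = ∑ Q ∈ s', b Q := hsum_eq
      _ ≤ ∑ Q ∈ s', ((Gf p r Q (ts Q) / C' - 2 * Af p Q (ts Q)) + δ) :=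
          Finset.sum_le_sum fun Q _ => htsb Q
      _ = ∑ Q ∈ s', (Gf p r Q (ts Q) / C' - 2 * Af p Q (ts Q)) + s'.card * δ := by
          rw [Finset.sum_add_distrib, Finset.sum_const, nsmul_eq_mul]
      _ ≤ 1 + ε := add_le_add hsum_e hcard'
      _ ≤ 2 + ε := add_le_add_left one_le_two _
  · -- pointwise bound
    intro Q t ht hA1
    show Gf p r Q t ≤ ENNReal.ofReal (max 2 (2*C)) * (Af p Q t + b Q)
    have hA1' : Af p Q t ≤ 1 := hA1
    have hle : Gf p r Q t / C' - 2 * Af p Q t ≤ b Q := le_sSup ⟨t, ht, hA1', rfl⟩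
    have h2 : Gf p r Q t / C' ≤ b Q + 2 * Af p Q t := tsub_le_iff_right.mp hle
    have h3 : Gf p r Q t ≤ (b Q + 2 * Af p Q t) * C' := by
      calc Gf p r Q t = Gf p r Q t / C' * C' := (ENNReal.div_mul_cancel hC'0 hC'top).symm
        _ ≤ (b Q + 2 * Af p Q t) * C' := mul_le_mul_left h2 _
    have h5 : 2 * C' ≤ ENNReal.ofReal (max 2 (2*C)) := by
      have : (2:ℝ≥0∞) * C' = ENNReal.ofReal (2 * C) := by
        rw [ENNReal.ofReal_mul (by norm_num : (0:ℝ) ≤ 2)]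
        norm_num [hC'def]
      rw [this]
      exact ENNReal.ofReal_le_ofReal (le_max_right _ _)
    calc Gf p r Q t ≤ (b Q + 2 * Af p Q t) * C' := h3
      _ ≤ (2 * (Af p Q t + b Q)) * C' := by
          apply mul_le_mul_left
          calc b Q + 2 * Af p Q t ≤ 2 * b Q + 2 * Af p Q t :=
                add_le_add_left (le_mul_of_one_le_left zero_le one_le_two) _
            _ = 2 * (Af p Q t + b Q) := by ring
      _ = (2 * C') * (Af p Q t + b Q) := by ring
      _ ≤ ENNReal.ofReal (max 2 (2*C)) * (Af p Q t + b Q) := mul_le_mul_left h5 _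
end
end

section
/- Let p : ℝ^n → [1,∞) be measurable with p_+ < ∞ and suppose p(·) satisfies the A_∞ condition with parameter λ ∈ (0,1) and constant C₀. Then there exists C > 0 such that for every cube Q with ‖χ_Q‖_{p(·)} ≥ 1, setting p_λ(Q) := (p χ_Q)^*(λ|Q|), one has ‖χ_Q‖_{p(·)}^{p_λ(Q)} ≤ C |Q|. -/
open MeasureTheory ENNReal Set

noncomputable section

lemma RCube.toSet_eq_pi {n : ℕ} (Q : RCube n) :
    Q.toSet = Set.pi Set.univ
      (fun i => Icc (Q.center i - Q.side/2) (Q.center i + Q.side/2)) := by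
  ext x
  simp only [RCube.toSet, mem_setOf_eq, mem_pi, mem_univ, true_implies, mem_Icc]
  constructor <;> intro h i <;> have := h i
  · rw [abs_le] at this; constructor <;> linarith [this.1, this.2]
  · rw [abs_le]; constructor <;> linarith [this.1, this.2]

lemma RCube.measurableSet_toSet {n : ℕ} (Q : RCube n) : MeasurableSet Q.toSet := by
  rw [Q.toSet_eq_pi]
  exact MeasurableSet.univ_pi fun i => measurableSet_Icc

lemma RCube.volume_toSet {n : ℕ} (Q : RCube n) :
    volume Q.toSet = ENNReal.ofReal Q.side ^ n := by
  rw [Q.toSet_eq_pi, volume_pi_pi]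
  have : ∀ i : Fin n, Q.center i + Q.side/2 - (Q.center i - Q.side/2) = Q.side :=
    fun i => by ring
  simp [Real.volume_Icc, this, Finset.prod_const]

lemma cubeSum_singleton {n : ℕ} (Q : RCube n) (E : RCube n → Set (Fin n → ℝ)) :
    cubeSum {Q} (fun _ => 1) E = chiE (E Q) := by
  funext x
  unfold cubeSum chiE
  simp only [mem_singleton_iff]
  rw [iSup_iSup_eq_left]
  by_cases hx : x ∈ E Q
  · simp [hx]
  · simp [hx]

theorem statement7 {n : ℕ} (p : (Fin n → ℝ) → ℝ) (hpm : Measurable p)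
    (hp1 : ∀ x, 1 ≤ p x)
    (hup : ∃ B : ℝ, ∀ᵐ x ∂(volume : Measure (Fin n → ℝ)), p x ≤ B)
    (lam C₀ : ℝ) (hlam : lam ∈ Ioo (0 : ℝ) 1) (hC₀ : 0 < C₀)
    (hA : AInftyWith p lam C₀) :
    ∃ C : ℝ, 0 < C ∧ ∀ Q : RCube n, 1 ≤ vnorm p (chiE Q.toSet) →
      vnorm p (chiE Q.toSet) ^ (rearr p Q (ENNReal.ofReal lam * volume Q.toSet)).toReal ≤
        ENNReal.ofReal C * volume Q.toSet := by
  obtain ⟨B, hB⟩ := hup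
  set B' : ℝ := max B 1 with hB'def
  have hB'1 : (1:ℝ) ≤ B' := le_max_right _ _
  have hB'0 : (0:ℝ) < B' := lt_of_lt_of_le one_pos hB'1
  have hM1 : (1:ℝ) ≤ max C₀ 1 := le_max_right _ _
  have hM0 : (0:ℝ) < max C₀ 1 := lt_of_lt_of_le one_pos hM1
  refine ⟨(max C₀ 1) ^ B', Real.rpow_pos_of_pos hM0 _, ?_⟩
  intro Q hN
  set V : ℝ≥0∞ := volume Q.toSet with hVdef
  have hQmeas : MeasurableSet Q.toSet := Q.measurableSet_toSet
  have hV0 : V ≠ 0 := by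
    rw [hVdef, Q.volume_toSet]
    exact pow_ne_zero _ (by simp [ENNReal.ofReal_eq_zero, not_le, Q.side_pos])
  have hVtop : V ≠ ⊤ := by
    rw [hVdef, Q.volume_toSet]
    exact ENNReal.pow_ne_top ENNReal.ofReal_ne_top
  have habs : ∀ y : Fin n → ℝ, |p y| = p y :=
    fun y => abs_of_nonneg (zero_le_one.trans (hp1 y))
  have hpB' : ∀ᵐ x ∂(volume : Measure (Fin n → ℝ)), p x ≤ B' :=
    hB.mono fun x hx => hx.trans (le_max_left _ _)
  -- modular identity for indicator functions
  have modular : ∀ (S : Set (Fin n → ℝ)), MeasurableSet S → ∀ l : ℝ≥0∞,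
      (∫⁻ x, (chiE S x / l) ^ p x) = ∫⁻ x in S, l⁻¹ ^ p x := by
    intro S hS l
    have heq : (fun x => (chiE S x / l) ^ p x) = S.indicator (fun x => l⁻¹ ^ p x) := by
      funext x
      by_cases hx : x ∈ S
      · simp [chiE, hx, indicator_of_mem, one_div]
      · simp [chiE, hx, indicator_of_notMem,
          ENNReal.zero_rpow_of_pos (lt_of_lt_of_le zero_lt_one (hp1 x))]
    rw [heq, lintegral_indicator hS]
  -- Step 1 : 1 ≤ V
  have hV1 : (1:ℝ≥0∞) ≤ V := by
    by_contra hV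
    push_neg at hV
    set l1 : ℝ≥0∞ := V ^ (1/B') with hl1
    have hl1pos : 0 < l1 :=
      ENNReal.rpow_pos (pos_iff_ne_zero.2 hV0) hVtop
    have hl1lt : l1 < 1 := ENNReal.rpow_lt_one hV (by positivity)
    have hinv1 : 1 ≤ l1⁻¹ := ENNReal.one_le_inv.2 hl1lt.le
    have hmem : l1 ∈ {l : ℝ≥0∞ | 0 < l ∧ (∫⁻ x, (chiE Q.toSet x / l) ^ p x) ≤ 1} := by
      refine ⟨hl1pos, ?_⟩
      rw [modular _ hQmeas]
      calc (∫⁻ x in Q.toSet, l1⁻¹ ^ p x)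
          ≤ ∫⁻ x in Q.toSet, V⁻¹ := by
            apply lintegral_mono_ae
            refine ae_restrict_of_ae ?_
            filter_upwards [hpB'] with x hx
            calc l1⁻¹ ^ p x ≤ l1⁻¹ ^ B' :=
                  ENNReal.rpow_le_rpow_of_exponent_le hinv1 hx
              _ = V⁻¹ := by
                  rw [hl1, ENNReal.inv_rpow, ← ENNReal.rpow_mul,
                    one_div_mul_cancel (ne_of_gt hB'0), ENNReal.rpow_one]
        _ = V⁻¹ * V := setLIntegral_const _ _
        _ = 1 := ENNReal.inv_mul_cancel hV0 hVtop
    have hle : vnorm p (chiE Q.toSet) ≤ l1 := sInf_le hmem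
    exact absurd (hN.trans hle) (not_le.2 hl1lt)
  -- rearrangement facts
  set T : Set ℝ≥0∞ :=
    {a : ℝ≥0∞ | volume {x | x ∈ Q.toSet ∧ a < ENNReal.ofReal |p x|} ≤ ENNReal.ofReal lam * V}
    with hTdef
  have hrearr : rearr p Q (ENNReal.ofReal lam * V) = sInf T := rfl
  set astar : ℝ≥0∞ := rearr p Q (ENNReal.ofReal lam * V) with hastar
  have hq1 : (1:ℝ≥0∞) ≤ astar := by
    show (1:ℝ≥0∞) ≤ sInf T
    refine le_sInf fun a ha => ?_
    by_contra hlt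
    push_neg at hlt
    have hsub : Q.toSet ⊆ {x | x ∈ Q.toSet ∧ a < ENNReal.ofReal |p x|} := by
      intro x hx
      refine ⟨hx, lt_of_lt_of_le hlt ?_⟩
      rw [habs x]
      exact ENNReal.one_le_ofReal.2 (hp1 x)
    have h1 : V ≤ ENNReal.ofReal lam * V := le_trans (measure_mono hsub) ha
    have h2 : ENNReal.ofReal lam * V < 1 * V := by
      apply ENNReal.mul_lt_mul_left hV0 hVtop
      exact ENNReal.ofReal_lt_one.2 hlam.2
    rw [one_mul] at h2
    exact absurd h1 (not_le.2 h2)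
  have hq0' : astar ≠ 0 := fun h => by simp [h] at hq1
  have hqB : astar ≤ ENNReal.ofReal B' := by
    show sInf T ≤ ENNReal.ofReal B'
    apply sInf_le
    have hnull : volume {x | x ∈ Q.toSet ∧ ENNReal.ofReal B' < ENNReal.ofReal |p x|} = 0 := by
      apply measure_mono_null (t := {x | ¬ p x ≤ B'}) ?_ (ae_iff.1 hpB')
      rintro x ⟨-, hx⟩
      have hpx0 : (0:ℝ) < |p x| := lt_of_lt_of_le one_pos (by rw [habs x]; exact hp1 x)
      have := (ENNReal.ofReal_lt_ofReal_iff hpx0).1 hx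
      rw [habs x] at this
      exact not_le.2 this
    rw [hTdef, mem_setOf_eq, hnull]
    exact zero_le
  have hqtop : astar ≠ ⊤ := ne_top_of_le_ne_top ENNReal.ofReal_ne_top hqB
  set q : ℝ := astar.toReal with hqdef
  have hq1r : (1:ℝ) ≤ q := by
    have := ENNReal.toReal_mono hqtop hq1
    simpa using this
  have hq0 : (0:ℝ) < q := lt_of_lt_of_le one_pos hq1r
  have hqB' : q ≤ B' := ENNReal.toReal_le_of_le_ofReal hB'0.le hqB
  -- the set E
  set g : (Fin n → ℝ) → ℝ≥0∞ := fun x => ENNReal.ofReal |p x| with hgdef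
  have hg : Measurable g := ENNReal.measurable_ofReal.comp hpm.abs
  set EQ : Set (Fin n → ℝ) := {x | x ∈ Q.toSet ∧ astar ≤ g x} with hEQ
  have hEmeas : MeasurableSet EQ := by
    have : EQ = Q.toSet ∩ {x | astar ≤ g x} := rfl
    rw [this]
    exact hQmeas.inter (measurableSet_le measurable_const hg)
  have hEsub : EQ ⊆ Q.toSet := fun x hx => hx.1
  -- |E| ≥ lam |Q|
  set s : ℕ → Set (Fin n → ℝ) :=
    fun k => {x | x ∈ Q.toSet ∧ astar - (↑(k+1):ℝ≥0∞)⁻¹ < g x} with hsdef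
  have hsmeas : ∀ k, MeasurableSet (s k) := by
    intro k
    have : s k = Q.toSet ∩ {x | astar - (↑(k+1):ℝ≥0∞)⁻¹ < g x} := rfl
    rw [this]
    exact hQmeas.inter (measurableSet_lt measurable_const hg)
  have hanti : Antitone s := by
    intro k l hkl x hx
    refine ⟨hx.1, lt_of_le_of_lt ?_ hx.2⟩
    apply tsub_le_tsub_left
    apply ENNReal.inv_le_inv.2
    exact_mod_cast Nat.succ_le_succ hkl
  have hkey : ∀ k : ℕ, ENNReal.ofReal lam * V < volume (s k) := by
    intro k
    by_contra h
    push_neg at h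
    have hmem : astar - (↑(k+1):ℝ≥0∞)⁻¹ ∈ T := h
    have hle : astar ≤ astar - (↑(k+1):ℝ≥0∞)⁻¹ := sInf_le hmem
    have hlt : astar - (↑(k+1):ℝ≥0∞)⁻¹ < astar :=
      ENNReal.sub_lt_self hqtop hq0' (by simp)
    exact absurd hle (not_le.2 hlt)
  have hInter : ⋂ k, s k = EQ := by
    ext x
    simp only [mem_iInter, hsdef, hEQ, mem_setOf_eq]
    constructor
    · intro h
      refine ⟨(h 0).1, ?_⟩
      by_contra hlt
      push_neg at hlt
      obtain ⟨m, hm⟩ := ENNReal.exists_inv_nat_lt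
        (a := astar - g x) (by rw [ne_eq, tsub_eq_zero_iff_le]; exact not_le.2 hlt)
      have hmle : ((↑(m+1):ℝ≥0∞))⁻¹ ≤ (↑m:ℝ≥0∞)⁻¹ := by
        apply ENNReal.inv_le_inv.2
        exact_mod_cast Nat.le_succ m
      have h2 : (↑(m+1):ℝ≥0∞)⁻¹ < astar - g x := lt_of_le_of_lt hmle hm
      have h3 : g x < astar - (↑(m+1):ℝ≥0∞)⁻¹ := by
        rw [lt_tsub_iff_right]
        rw [lt_tsub_iff_right] at h2
        rwa [add_comm]
      exact absurd (h m).2 (not_lt.2 h3.le)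
    · rintro ⟨hxQ, hle⟩ k
      exact ⟨hxQ, lt_of_lt_of_le (ENNReal.sub_lt_self hqtop hq0' (by simp)) hle⟩
  have hEvol : ENNReal.ofReal lam * V ≤ volume EQ := by
    rw [← hInter, Directed.measure_iInter (fun k => (hsmeas k).nullMeasurableSet)
      hanti.directed_ge ⟨0, ?_⟩]
    · exact le_iInf fun k => (hkey k).le
    · exact ne_top_of_le_ne_top hVtop (measure_mono fun x hx => hx.1)
  -- apply the A∞ condition
  have hIneq := hA {Q} (Set.pairwise_singleton _ _) (fun _ => 1)
    (fun _ _ => zero_le_one) (fun _ => EQ) ?_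
  swap
  · rintro Q' hQ'
    rw [mem_singleton_iff] at hQ'
    subst hQ'
    exact ⟨hEmeas, hEsub, hEvol⟩
  rw [cubeSum_singleton, cubeSum_singleton] at hIneq
  -- bound vnorm p (chiE EQ)
  set l0 : ℝ≥0∞ := V ^ (1/q) with hl0
  have hl0_1 : (1:ℝ≥0∞) ≤ l0 :=
    ENNReal.one_le_rpow hV1 (by positivity)
  have hl0q : l0 ^ q = V := by
    rw [hl0, ← ENNReal.rpow_mul, one_div_mul_cancel (ne_of_gt hq0), ENNReal.rpow_one]
  have hvE : vnorm p (chiE EQ) ≤ l0 := by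
    apply sInf_le
    refine ⟨lt_of_lt_of_le one_pos hl0_1, ?_⟩
    rw [modular _ hEmeas]
    calc (∫⁻ x in EQ, l0⁻¹ ^ p x)
        ≤ ∫⁻ x in EQ, V⁻¹ := by
          apply lintegral_mono_ae
          rw [ae_restrict_iff' hEmeas]
          filter_upwards with x hx
          have hpx : q ≤ p x := by
            have h := ENNReal.toReal_le_of_le_ofReal (abs_nonneg _) hx.2
            rwa [habs x] at h
          calc l0⁻¹ ^ p x ≤ l0⁻¹ ^ q :=
                ENNReal.rpow_le_rpow_of_exponent_ge (ENNReal.inv_le_one.2 hl0_1) hpx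
            _ = V⁻¹ := by rw [ENNReal.inv_rpow, hl0q]
      _ = V⁻¹ * volume EQ := setLIntegral_const _ _
      _ ≤ V⁻¹ * V := mul_le_mul_right (measure_mono hEsub) _
      _ = 1 := ENNReal.inv_mul_cancel hV0 hVtop
  have hNle : vnorm p (chiE Q.toSet) ≤ ENNReal.ofReal C₀ * l0 :=
    hIneq.trans (mul_le_mul_right hvE _)
  calc vnorm p (chiE Q.toSet) ^ q
      ≤ (ENNReal.ofReal C₀ * l0) ^ q := ENNReal.rpow_le_rpow hNle hq0.le
    _ = (ENNReal.ofReal C₀) ^ q * V := by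
        rw [ENNReal.mul_rpow_of_nonneg _ _ hq0.le, hl0q]
    _ ≤ ENNReal.ofReal ((max C₀ 1) ^ B') * V := by
        apply mul_le_mul_left
        calc (ENNReal.ofReal C₀) ^ q
            ≤ (ENNReal.ofReal (max C₀ 1)) ^ q :=
              ENNReal.rpow_le_rpow (ENNReal.ofReal_le_ofReal (le_max_left _ _)) hq0.le
          _ ≤ (ENNReal.ofReal (max C₀ 1)) ^ B' :=
              ENNReal.rpow_le_rpow_of_exponent_le (ENNReal.one_le_ofReal.2 hM1) hqB'
          _ = ENNReal.ofReal ((max C₀ 1) ^ B') := ENNReal.ofReal_rpow_of_pos hM0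
end
end
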